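/- Let D_{-1} = Z_2^n, D_p = Span_{F_2}{[σ] : σ ∈ X_p} for 0 ≤ p ≤ n-1, with d_0^D([α]) = α and d_p^D([σ]) = [(σ \ {α_1}) + α_1] + Σ_i [σ \ {α_i}] for p ≥ 1. Then 𝔇 = {D_p, d_p^D} is a chain complex: d_{p-1}^D ∘ d_p^D = 0 for all p. -/
import Mathlib


open Finset

attribute [local instance] Classical.propDecidable

abbrev V (n : ℕ) : Type := Fin n → ZMod 2

def LinIndep {n : ℕ} (s : Finset (V n)) : Prop :=
  LinearIndependent (ZMod 2) (fun x : (s : Set (V n)) => (x : V n))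

def IsSimplex (n p : ℕ) (σ : Finset (V n)) : Prop :=
  σ.card = p + 1 ∧ LinIndep σ

def shift {n : ℕ} (σ : Finset (V n)) (α : V n) : Finset (V n) :=
  σ.image (· + α)

def SimpRel {n : ℕ} (σ σ' : Finset (V n)) : Prop :=
  σ = σ' ∨ ∃ α : V n, σ ∩ σ' = {α} ∧ shift (σ \ {α}) α = σ' \ {α}

/-- The class sum `[σ] = ∑_{σ' ~ σ} σ'`, a simplicial chain over `F_2`. -/
noncomputable def classSum {n : ℕ} (σ : Finset (V n)) : Finset (V n) →₀ ZMod 2 :=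
  ∑ σ' ∈ Finset.univ.filter (fun σ' => SimpRel σ σ'), Finsupp.single σ' 1

/-- The value `d_p^D([σ])` computed using the chosen element `α ∈ σ`:
`[(σ \ {α}) + α] + ∑_{β ∈ σ} [σ \ {β}]`. -/
noncomputable def dDat {n : ℕ} (σ : Finset (V n)) (α : V n) : Finset (V n) →₀ ZMod 2 :=
  classSum (shift (σ \ {α}) α) + ∑ β ∈ σ, classSum (σ \ {β})

/-- `d_p^D([σ])`, computed with a canonically chosen element of `σ`. -/
noncomputable def dD {n : ℕ} (σ : Finset (V n)) : Finset (V n) →₀ ZMod 2 :=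
  if h : σ.Nonempty then dDat σ (Exists.choose h) else 0

/-- The degree-zero differential `d_0^D`, sending `[{α}]` to `α ∈ Z_2^n`,
extended linearly to chains. -/
noncomputable def d0map (n : ℕ) : (Finset (V n) →₀ ZMod 2) →ₗ[ZMod 2] V n :=
  Finsupp.lsum (ZMod 2) fun σ =>
    LinearMap.toSpanSingleton (ZMod 2) (V n)
      (if h : σ.Nonempty then Exists.choose h else 0)

section Aux

variable {n : ℕ}

lemma v_add_self (x : V n) : x + x = 0 := by
  funext i; exact CharTwo.add_self_eq_zero _

lemma zmod2_cases : ∀ a : ZMod 2, a = 0 ∨ a = 1 := by decide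

lemma linIndep_iff (s : Finset (V n)) :
    LinIndep s ↔ ∀ T ⊆ s, ∑ x ∈ T, x = 0 → T = ∅ := by
  constructor
  · intro h T hT hsum
    rw [Finset.eq_empty_iff_forall_notMem]
    intro a ha
    have h2 := Fintype.linearIndependent_iff.mp h
      (fun x => if (x : V n) ∈ T then 1 else 0)
    have hs : (∑ i : (s : Set (V n)), (if (i : V n) ∈ T then (1 : ZMod 2) else 0) • (i : V n)) = 0 := by
      rw [Finset.sum_finset_coe (fun x => (if x ∈ T then (1 : ZMod 2) else 0) • x) s]
      rw [← Finset.sum_filter_of_ne (f := fun x => (if x ∈ T then (1 : ZMod 2) else 0) • x)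
        (p := fun x => x ∈ T)]
      · rw [Finset.filter_mem_eq_inter, Finset.inter_eq_right.mpr hT]
        simpa using hsum
      · intro x _ hx
        by_contra hxt
        simp [if_neg hxt] at hx
    have := h2 hs ⟨a, hT ha⟩
    simp [ha] at this
  · intro h
    rw [LinIndep, Fintype.linearIndependent_iff]
    intro g hg i
    rcases zmod2_cases (g i) with h0 | h1
    · exact h0
    exfalso
    set T : Finset (V n) := (Finset.univ.filter (fun j : (s : Set (V n)) => g j = 1)).image Subtype.val with hT
    have hTs : T ⊆ s := by
      intro x hx
      simp only [hT, Finset.mem_image, Finset.mem_filter] at hx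
      obtain ⟨j, _, rfl⟩ := hx
      exact j.2
    have hsum : ∑ x ∈ T, x = 0 := by
      rw [hT, Finset.sum_image (by intro a _ b _ hab; exact Subtype.ext hab)]
      rw [← hg]
      rw [Finset.sum_filter]
      apply Finset.sum_congr rfl
      intro j _
      rcases zmod2_cases (g j) with hj | hj <;> simp [hj]
    have := h T hTs hsum
    rw [Finset.eq_empty_iff_forall_notMem] at this
    exact this i (Finset.mem_image.mpr ⟨i, Finset.mem_filter.mpr ⟨Finset.mem_univ _, h1⟩, rfl⟩)

lemma shift_inj (α : V n) : Function.Injective (· + α) := by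
  intro a b h; simpa using congrArg (· + α) h

lemma mem_shift {s : Finset (V n)} {α x : V n} : x ∈ shift s α ↔ x + α ∈ s := by
  simp only [shift, Finset.mem_image]
  constructor
  · rintro ⟨y, hy, rfl⟩; simpa [add_assoc, v_add_self] using hy
  · intro h; exact ⟨x + α, h, by simp [add_assoc, v_add_self]⟩

lemma shift_shift (s : Finset (V n)) (α : V n) : shift (shift s α) α = s := by
  ext x; simp [mem_shift, add_assoc, v_add_self]

lemma card_shift (s : Finset (V n)) (α : V n) : (shift s α).card = s.card :=
  Finset.card_image_of_injective _ (shift_inj α)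

lemma sum_shift (s : Finset (V n)) (α : V n) :
    ∑ x ∈ shift s α, x = (∑ x ∈ s, x) + s.card • α := by
  rw [shift, Finset.sum_image (fun a _ b _ h => shift_inj α h)]
  rw [Finset.sum_add_distrib, Finset.sum_const]

lemma li_subset {s t : Finset (V n)} (h : LinIndep t) (hst : s ⊆ t) : LinIndep s := by
  rw [linIndep_iff] at h ⊢
  exact fun T hT => h T (hT.trans hst)

lemma li_sum_ne {s : Finset (V n)} (h : LinIndep s) {T : Finset (V n)} (hT : T ⊆ s)
    (hne : T.Nonempty) : ∑ x ∈ T, x ≠ 0 := by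
  intro h0
  exact hne.ne_empty ((linIndep_iff s).mp h T hT h0)

lemma zero_notMem_li {s : Finset (V n)} (h : LinIndep s) : (0 : V n) ∉ s := by
  intro h0
  exact li_sum_ne h (Finset.singleton_subset_iff.mpr h0) ⟨0, Finset.mem_singleton_self 0⟩
    (by simp)

/-- `σ^α`: the simplex equivalent to `σ` obtained by shifting away from `α`. -/
def cl (σ : Finset (V n)) (α : V n) : Finset (V n) := insert α (shift (σ \ {α}) α)

lemma notMem_shift_self {σ : Finset (V n)} {α : V n} (h : LinIndep σ) (hα : α ∈ σ) :
    α ∉ shift (σ \ {α}) α := by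
  rw [mem_shift, v_add_self]
  intro h0
  exact zero_notMem_li h (Finset.mem_sdiff.mp h0).1

lemma cl_sdiff {σ : Finset (V n)} {α : V n} (h : LinIndep σ) (hα : α ∈ σ) :
    cl σ α \ {α} = shift (σ \ {α}) α := by
  rw [cl, Finset.insert_sdiff_of_mem _ (Finset.mem_singleton_self α),
    Finset.sdiff_singleton_eq_erase, Finset.erase_eq_of_notMem (notMem_shift_self h hα)]

lemma sum_triple {a b c : V n} (hab : a ≠ b) (hac : a ≠ c) (hbc : b ≠ c) :
    ∑ x ∈ ({a, b, c} : Finset (V n)), x = a + b + c := by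
  rw [Finset.sum_insert (by simp [hab, hac]), Finset.sum_insert (by simp [hbc]),
    Finset.sum_singleton, add_assoc]

lemma inter_cl {σ : Finset (V n)} {α : V n} (h : LinIndep σ) (hα : α ∈ σ) :
    σ ∩ cl σ α = {α} := by
  ext x
  simp only [Finset.mem_inter, Finset.mem_singleton, cl, Finset.mem_insert]
  constructor
  · rintro ⟨hxσ, hx⟩
    rcases hx with rfl | hx
    · rfl
    rw [mem_shift] at hx
    obtain ⟨hsσ, hsα⟩ := Finset.mem_sdiff.mp hx
    rw [Finset.mem_singleton] at hsα
    by_contra hxα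
    by_cases hxs : x = x + α
    · have hα0 : α = 0 := by
        have h2 := congrArg (fun y => x + y) hxs
        simpa [v_add_self, ← add_assoc] using h2.symm
      rw [hα0] at hα
      exact absurd hα (zero_notMem_li h)
    · refine li_sum_ne h (T := {x, x + α, α}) ?_ ⟨x, by simp⟩ ?_
      · intro y hy
        simp only [Finset.mem_insert, Finset.mem_singleton] at hy
        rcases hy with rfl | rfl | rfl
        · exact hxσ
        · exact hsσ
        · exact hα
      · rw [sum_triple hxs hxα (fun hc => hsα (shift_inj α (by simpa using hc.symm)))]
        rw [← add_assoc]
        simp [add_assoc, v_add_self]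
  · rintro rfl
    exact ⟨hα, Or.inl rfl⟩

lemma nsmul_v (k : ℕ) (α : V n) : k • α = if Even k then 0 else α := by
  induction k with
  | zero => simp
  | succ m ih =>
    rw [succ_nsmul, ih]
    by_cases h : Even m <;> simp [h, Nat.even_add_one, v_add_self]

lemma shift_subset {s t : Finset (V n)} (h : s ⊆ t) (α : V n) : shift s α ⊆ shift t α :=
  Finset.image_subset_image h

lemma li_cl {σ : Finset (V n)} {α : V n} (h : LinIndep σ) (hα : α ∈ σ) :
    LinIndep (cl σ α) := by
  rw [linIndep_iff]
  intro T hT hsum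
  have hTe : T.erase α ⊆ shift (σ \ {α}) α := Finset.subset_insert_iff.mp hT
  set U := shift (T.erase α) α with hUdef
  have hU : U ⊆ σ \ {α} := by
    have := shift_subset hTe α
    rwa [shift_shift] at this
  have hUσ : U ⊆ σ := hU.trans (Finset.sdiff_subset)
  have hαU : α ∉ U := fun hc => (Finset.mem_sdiff.mp (hU hc)).2 (Finset.mem_singleton_self α)
  have hTE : T.erase α = shift U α := (shift_shift (T.erase α) α).symm
  have hsum_er : ∑ x ∈ T.erase α, x = ∑ x ∈ U, x + U.card • α := by
    rw [hTE, sum_shift, card_shift]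
  have hins : ¬ (∑ x ∈ U, x + α = 0) := by
    intro hc
    refine li_sum_ne h (T := insert α U) (Finset.insert_subset hα hUσ)
      (Finset.insert_nonempty _ _) ?_
    rw [Finset.sum_insert hαU, add_comm]
    exact hc
  by_cases hαT : α ∈ T
  · rw [← Finset.sum_erase_add T _ hαT, hsum_er] at hsum
    by_cases hev : Even U.card
    · rw [nsmul_v, if_pos hev, add_zero] at hsum
      exact absurd hsum hins
    · rw [nsmul_v, if_neg hev, add_assoc, v_add_self, add_zero] at hsum
      have : U = ∅ := (linIndep_iff σ).mp h U hUσ hsum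
      rw [this] at hev
      exact absurd (by simp) hev
  · have hTeq : T.erase α = T := Finset.erase_eq_of_notMem hαT
    rw [← hTeq, hsum_er] at hsum
    by_cases hev : Even U.card
    · rw [nsmul_v, if_pos hev, add_zero] at hsum
      have hU0 : U = ∅ := (linIndep_iff σ).mp h U hUσ hsum
      rw [← hTeq, hTE, hU0]
      rfl
    · rw [nsmul_v, if_neg hev] at hsum
      exact absurd hsum hins

lemma add_cancel_iff {a b c : V n} : a + b = c ↔ a = c + b :=
  ⟨fun h => by rw [← h, add_assoc, v_add_self, add_zero],
   fun h => by rw [h, add_assoc, v_add_self, add_zero]⟩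

lemma mem_cl {σ : Finset (V n)} {α x : V n} :
    x ∈ cl σ α ↔ x = α ∨ (x + α ∈ σ ∧ x + α ≠ α) := by
  simp [cl, mem_shift, Finset.mem_sdiff]

lemma simpRel_iff {σ τ : Finset (V n)} (h : LinIndep σ) :
    SimpRel σ τ ↔ τ = σ ∨ ∃ α ∈ σ, τ = cl σ α := by
  constructor
  · rintro (rfl | ⟨α, hint, hsh⟩)
    · exact Or.inl rfl
    have hατ : α ∈ τ := Finset.mem_inter.mp (hint ▸ Finset.mem_singleton_self α) |>.2
    have hασ : α ∈ σ := Finset.mem_inter.mp (hint ▸ Finset.mem_singleton_self α) |>.1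
    refine Or.inr ⟨α, hασ, ?_⟩
    rw [cl, hsh, Finset.sdiff_singleton_eq_erase, Finset.insert_erase hατ]
  · rintro (rfl | ⟨α, hα, rfl⟩)
    · exact Or.inl rfl
    exact Or.inr ⟨α, inter_cl h hα, (cl_sdiff h hα).symm⟩

/-- The equivalence class of a linearly independent simplex. -/
def eClass (σ : Finset (V n)) : Finset (Finset (V n)) := insert σ (σ.image (cl σ))

lemma classSum_eq {σ : Finset (V n)} (h : LinIndep σ) :
    classSum σ = ∑ τ ∈ eClass σ, Finsupp.single τ 1 := by
  unfold classSum
  congr 1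
  ext τ
  simp only [Finset.mem_filter, Finset.mem_univ, true_and, simpRel_iff h, eClass,
    Finset.mem_insert, Finset.mem_image]
  constructor
  · rintro (rfl | ⟨α, hα, rfl⟩)
    · exact Or.inl rfl
    · exact Or.inr ⟨α, hα, rfl⟩
  · rintro (rfl | ⟨α, hα, rfl⟩)
    · exact Or.inl rfl
    · exact Or.inr ⟨α, hα, rfl⟩

lemma cl_cl_self {σ : Finset (V n)} {α : V n} (h : LinIndep σ) (hα : α ∈ σ) :
    cl (cl σ α) α = σ := by
  rw [cl, cl_sdiff h hα, shift_shift, Finset.sdiff_singleton_eq_erase, Finset.insert_erase hα]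

lemma cl_cl {σ : Finset (V n)} {α t : V n} (h : LinIndep σ) (hα : α ∈ σ) (ht : t ∈ σ)
    (htα : t ≠ α) : cl (cl σ α) (t + α) = cl σ t := by
  have ht0 : t ≠ 0 := fun hc => zero_notMem_li h (hc ▸ ht)
  have hα0 : α ≠ 0 := fun hc => zero_notMem_li h (hc ▸ hα)
  have htaα : t + α ≠ α := fun hc => ht0 (by rw [add_cancel_iff, v_add_self] at hc; exact hc)
  ext x
  rw [mem_cl, mem_cl, mem_cl]
  have e1 : x + (t + α) + α = x + t := by
    rw [add_assoc, add_assoc, v_add_self, add_zero]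
  rw [e1]
  have e2 : t + α + t = α := by rw [add_right_comm, v_add_self, zero_add]
  have e3 : α + (t + α) = t := by rw [add_comm t α, ← add_assoc, v_add_self, zero_add]
  have e4 : t + (t + α) = α := by rw [← add_assoc, v_add_self, zero_add]
  constructor
  · rintro (rfl | ⟨(hx | ⟨hx1, hx2⟩), hne⟩)
    · rw [e2]
      exact Or.inr ⟨hα, Ne.symm htα⟩
    · rw [add_cancel_iff, e3] at hx
      exact Or.inl hx
    · refine Or.inr ⟨hx1, fun hc => ?_⟩
      rw [add_cancel_iff, v_add_self] at hc
      exact hne (by rw [hc, zero_add])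
  · rintro (rfl | ⟨hx1, hx2⟩)
    · exact Or.inr ⟨Or.inl e4, by rw [e4]; exact Ne.symm htaα⟩
    · by_cases hxtα : x + t = α
      · rw [add_cancel_iff, add_comm] at hxtα
        exact Or.inl hxtα
      · refine Or.inr ⟨Or.inr ⟨hx1, hxtα⟩, fun hc => ?_⟩
        rw [add_cancel_iff, v_add_self] at hc
        exact hx2 (by rw [hc, zero_add])

lemma eClass_cl {σ : Finset (V n)} {α : V n} (h : LinIndep σ) (hα : α ∈ σ) :
    eClass (cl σ α) = eClass σ := by
  have himg : σ.image (cl σ) = insert (cl σ α) ((σ \ {α}).image (cl σ)) := by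
    calc σ.image (cl σ) = (insert α (σ.erase α)).image (cl σ) := by
          rw [Finset.insert_erase hα]
      _ = insert (cl σ α) ((σ.erase α).image (cl σ)) := Finset.image_insert _ _ _
      _ = insert (cl σ α) ((σ \ {α}).image (cl σ)) := by
          rw [Finset.sdiff_singleton_eq_erase]
  have himg2 : (cl σ α).image (cl (cl σ α)) =
      insert σ ((σ \ {α}).image (cl σ)) := by
    have h1 : (cl σ α).image (cl (cl σ α)) =
        insert (cl (cl σ α) α) ((shift (σ \ {α}) α).image (cl (cl σ α))) :=
      Finset.image_insert _ _ _
    rw [h1, cl_cl_self h hα]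
    congr 1
    rw [shift, Finset.image_image]
    apply Finset.image_congr
    intro t ht
    obtain ⟨htσ, htα⟩ := Finset.mem_sdiff.mp ht
    rw [Finset.mem_singleton] at htα
    exact cl_cl h hα htσ htα
  rw [eClass, eClass, himg, himg2, Finset.insert_comm]

lemma classSum_cl {σ : Finset (V n)} {α : V n} (h : LinIndep σ) (hα : α ∈ σ) :
    classSum (cl σ α) = classSum σ := by
  rw [classSum_eq (li_cl h hα), classSum_eq h, eClass_cl h hα]

lemma li_shift_sdiff {σ : Finset (V n)} {α : V n} (h : LinIndep σ) (hα : α ∈ σ) :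
    LinIndep (shift (σ \ {α}) α) :=
  li_subset (li_cl h hα) (Finset.subset_insert _ _)

/-- Choice independence: the class sum of the shifted face does not depend on
the chosen element. -/
lemma classSum_shift_indep {τ : Finset (V n)} (h : LinIndep τ) {γ γ' : V n}
    (hγ : γ ∈ τ) (hγ' : γ' ∈ τ) :
    classSum (shift (τ \ {γ}) γ) = classSum (shift (τ \ {γ'}) γ') := by
  rcases eq_or_ne γ γ' with rfl | hne
  · rfl
  have hA : LinIndep (shift (τ \ {γ}) γ) := li_shift_sdiff h hγ
  have hδ : γ + γ' ∈ shift (τ \ {γ}) γ := by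
    rw [mem_shift, add_comm (γ + γ') γ, ← add_assoc, v_add_self, zero_add]
    exact Finset.mem_sdiff.mpr ⟨hγ', Finset.notMem_singleton.mpr (Ne.symm hne)⟩
  have hkey : cl (shift (τ \ {γ}) γ) (γ + γ') = shift (τ \ {γ'}) γ' := by
    ext x
    rw [mem_cl, mem_shift, mem_shift, Finset.mem_sdiff, Finset.mem_sdiff,
      Finset.mem_singleton, Finset.mem_singleton]
    have e1 : x + (γ + γ') + γ = x + γ' := by
      rw [add_comm γ γ', add_assoc, add_assoc, v_add_self, add_zero]
    rw [e1]
    have hγγ' : γ + γ' + γ' = γ := by rw [add_assoc, v_add_self, add_zero]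
    constructor
    · rintro (rfl | ⟨⟨hx1, hx2⟩, hne2⟩)
      · rw [hγγ']
        exact ⟨hγ, hne⟩
      · refine ⟨hx1, fun hc => ?_⟩
        rw [add_cancel_iff, v_add_self] at hc
        exact hne2 (by rw [hc, zero_add])
    · rintro ⟨hx1, hx2⟩
      by_cases hxγ : x + γ' = γ
      · rw [add_cancel_iff] at hxγ
        exact Or.inl hxγ
      · refine Or.inr ⟨⟨hx1, hxγ⟩, fun hc => ?_⟩
        rw [add_cancel_iff, v_add_self] at hc
        exact hx2 (by rw [hc, zero_add])
  rw [← hkey, classSum_cl hA hδ]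

lemma f_add_self (f : Finset (V n) →₀ ZMod 2) : f + f = 0 := by
  ext a
  simp [CharTwo.add_self_eq_zero]

lemma sum_pairs_zero (s : Finset (V n)) :
    ∑ β ∈ s, ∑ δ ∈ s \ {β}, classSum ((s \ {β}) \ {δ}) = 0 := by
  rw [Finset.sum_sigma' s (fun β => s \ {β}) (fun β δ => classSum ((s \ {β}) \ {δ}))]
  refine Finset.sum_involution (fun (x : (_ : V n) × V n) _ => (⟨x.2, x.1⟩ : (_ : V n) × V n)) ?_ ?_ ?_ ?_
  · intro a _
    have hcomm : ((s \ {a.1}) \ {a.2}) = ((s \ {a.2}) \ {a.1}) := sdiff_right_comm _ _ _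
    rw [hcomm]
    exact f_add_self _
  · rintro ⟨b, d⟩ ha _ hc
    have hfst : d = b := congrArg Sigma.fst hc
    have h2 := (Finset.mem_sigma.mp ha).2
    exact (Finset.mem_sdiff.mp h2).2 (Finset.mem_singleton.mpr hfst)
  · intro a ha
    obtain ⟨h1, h2⟩ := Finset.mem_sigma.mp ha
    obtain ⟨h2s, h2ne⟩ := Finset.mem_sdiff.mp h2
    refine Finset.mem_sigma.mpr ⟨h2s, Finset.mem_sdiff.mpr ⟨h1, ?_⟩⟩
    rw [Finset.mem_singleton] at h2ne ⊢
    exact fun hc => h2ne hc.symm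
  · intro a ha
    rfl

lemma add_eq_zero_v {x : V n} (h : x + x = 0) : True := trivial

lemma shift_face1 (σ : Finset (V n)) (α t : V n) :
    shift (shift (σ \ {α}) α \ {t + α}) (t + α) = shift ((σ \ {α}) \ {t}) t := by
  ext x
  have e1 : x + (t + α) + α = x + t := by rw [add_assoc, add_assoc, v_add_self, add_zero]
  have h2 : ∀ y : V n, x + y = y ↔ x = 0 := fun y => by
    rw [add_cancel_iff, v_add_self]
  simp only [mem_shift, Finset.mem_sdiff, Finset.mem_singleton, e1, h2]
  try tauto

lemma shift_face2 (σ : Finset (V n)) (α β : V n) :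
    shift ((σ \ {β}) \ {α}) α = shift (σ \ {α}) α \ {β + α} := by
  ext x
  have h3 : x + α = β ↔ x = β + α := add_cancel_iff
  simp only [mem_shift, Finset.mem_sdiff, Finset.mem_singleton, h3]
  tauto

lemma li_singleton {x : V n} (hx : x ≠ 0) : LinIndep ({x} : Finset (V n)) := by
  rw [linIndep_iff]
  intro T hT hsum
  rcases Finset.subset_singleton_iff.mp hT with rfl | rfl
  · rfl
  · rw [Finset.sum_singleton] at hsum
    exact absurd hsum hx

lemma classSum_singleton {x : V n} (hx : x ≠ 0) :
    classSum ({x} : Finset (V n)) = Finsupp.single {x} 1 := by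
  rw [classSum_eq (li_singleton hx)]
  have : eClass ({x} : Finset (V n)) = {({x} : Finset (V n))} := by
    rw [eClass, Finset.image_singleton]
    have : cl ({x} : Finset (V n)) x = {x} := by
      rw [cl]
      simp [shift]
    rw [this, Finset.insert_eq_self]
    exact Finset.mem_singleton_self _
  rw [this, Finset.sum_singleton]

lemma dD_eq {τ : Finset (V n)} (h : τ.Nonempty) : dD τ = dDat τ (Exists.choose h) := by
  unfold dD
  rw [dif_pos h]

lemma d0_singleton (x : V n) : d0map n (Finsupp.single ({x} : Finset (V n)) 1) = x := by
  rw [d0map, Finsupp.lsum_single]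
  have hne : ({x} : Finset (V n)).Nonempty := Finset.singleton_nonempty x
  rw [dif_pos hne, LinearMap.toSpanSingleton_apply, one_smul]
  exact Finset.mem_singleton.mp hne.choose_spec

end Aux

/-- `𝔇 = {D_p, d_p^D}` is a chain complex: `d_{p-1}^D ∘ d_p^D = 0` for all `p`.
(For `p ≥ 2` both differentials land in chain groups; for `p = 1` the second
differential is `d_0^D` with values in `Z_2^n`.) -/
theorem stmt5 (n : ℕ) :
    (∀ p : ℕ, 2 ≤ p → ∀ σ : Finset (V n), IsSimplex n p σ → ∀ α ∈ σ,
      dD (shift (σ \ {α}) α) + ∑ β ∈ σ, dD (σ \ {β}) = 0) ∧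
    (∀ σ : Finset (V n), IsSimplex n 1 σ → ∀ α ∈ σ, d0map n (dDat σ α) = 0) := by
  constructor
  · intro p hp σ hσ α hα
    obtain ⟨hcard, hli⟩ := id hσ
    have hcards : (σ \ {α}).card = p := by
      rw [Finset.sdiff_singleton_eq_erase, Finset.card_erase_of_mem hα, hcard]
      omega
    set τα := shift (σ \ {α}) α with hτdef
    have hliτ : LinIndep τα := li_shift_sdiff hli hα
    have hτcard : τα.card = p := by rw [hτdef, card_shift, hcards]
    have hτne : τα.Nonempty := Finset.card_pos.mp (by omega)
    have hfne : ∀ β, β ∈ σ → (σ \ {β}).Nonempty := by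
      intro β hβ
      apply Finset.card_pos.mp
      rw [Finset.sdiff_singleton_eq_erase, Finset.card_erase_of_mem hβ, hcard]
      omega
    have hlif : ∀ β : V n, LinIndep (σ \ {β}) := fun β => li_subset hli Finset.sdiff_subset
    set c₀ := Exists.choose hτne with hc₀def
    have hc₀ : c₀ ∈ τα := hτne.choose_spec
    set X := classSum (shift (τα \ {c₀}) c₀) with hX
    have hB : dD (σ \ {α}) = X + ∑ δ ∈ σ \ {α}, classSum ((σ \ {α}) \ {δ}) := by
      rw [dD_eq (hfne α hα)]
      unfold dDat
      congr 1
      have hc₁ : Exists.choose (hfne α hα) ∈ σ \ {α} := (hfne α hα).choose_spec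
      have ht₀ : c₀ + α ∈ σ \ {α} := mem_shift.mp hc₀
      have hc₀t : c₀ + α + α = c₀ := by rw [add_assoc, v_add_self, add_zero]
      calc classSum (shift ((σ \ {α}) \ {Exists.choose (hfne α hα)}) (Exists.choose (hfne α hα)))
          = classSum (shift ((σ \ {α}) \ {c₀ + α}) (c₀ + α)) :=
            classSum_shift_indep (hlif α) hc₁ ht₀
        _ = classSum (shift (τα \ {c₀ + α + α}) (c₀ + α + α)) := by
            rw [hτdef, shift_face1]
        _ = X := by rw [hX, hc₀t]
    have hC : ∀ β ∈ σ.erase α, dD (σ \ {β}) =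
        classSum (τα \ {β + α}) + ∑ δ ∈ σ \ {β}, classSum ((σ \ {β}) \ {δ}) := by
      intro β hβ
      obtain ⟨hβα, hβσ⟩ := Finset.mem_erase.mp hβ
      rw [dD_eq (hfne β hβσ)]
      unfold dDat
      congr 1
      have hαβ : α ∈ σ \ {β} :=
        Finset.mem_sdiff.mpr ⟨hα, Finset.notMem_singleton.mpr (Ne.symm hβα)⟩
      calc classSum (shift ((σ \ {β}) \ {Exists.choose (hfne β hβσ)}) (Exists.choose (hfne β hβσ)))
          = classSum (shift ((σ \ {β}) \ {α}) α) :=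
            classSum_shift_indep (hlif β) ((hfne β hβσ).choose_spec) hαβ
        _ = classSum (τα \ {β + α}) := by rw [shift_face2, hτdef]
    have hD : ∑ δ ∈ τα, classSum (τα \ {δ}) = ∑ t ∈ σ \ {α}, classSum (τα \ {t + α}) :=
      Finset.sum_image (fun a _ b _ h => shift_inj α h)
    rw [dD_eq hτne, ← hc₀def]
    unfold dDat
    rw [← Finset.add_sum_erase σ (fun β => dD (σ \ {β})) hα, hB,
      Finset.sum_congr rfl hC, Finset.sum_add_distrib]
    have hE : ∑ β ∈ σ.erase α, classSum (τα \ {β + α}) = ∑ δ ∈ τα, classSum (τα \ {δ}) := by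
      rw [hD, Finset.sdiff_singleton_eq_erase]
    rw [hE, ← hX]
    have hDsum : (∑ δ ∈ σ \ {α}, classSum ((σ \ {α}) \ {δ}))
        + ∑ β ∈ σ.erase α, (∑ δ ∈ σ \ {β}, classSum ((σ \ {β}) \ {δ})) = 0 := by
      have h0 := sum_pairs_zero σ
      rw [← Finset.add_sum_erase σ _ hα] at h0
      exact h0
    set S := ∑ δ ∈ τα, classSum (τα \ {δ}) with hS
    set Dα := ∑ δ ∈ σ \ {α}, classSum ((σ \ {α}) \ {δ}) with hDα
    set DE := ∑ β ∈ σ.erase α, (∑ δ ∈ σ \ {β}, classSum ((σ \ {β}) \ {δ})) with hDE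
    calc X + S + (X + Dα + (S + DE)) = (X + X) + (S + S) + (Dα + DE) := by abel
      _ = 0 := by rw [f_add_self, f_add_self, hDsum]; simp
  · intro σ hσ α hα
    obtain ⟨hcard, hli⟩ := id hσ
    obtain ⟨x, y, hxy, rfl⟩ := Finset.card_eq_two.mp hcard
    have hmem := Finset.mem_insert.mp hα
    rw [Finset.mem_singleton] at hmem
    obtain ⟨b, hbα, hbmem, hσeq⟩ : ∃ b : V n, b ≠ α ∧ b ∈ ({x, y} : Finset (V n)) ∧
        ({x, y} : Finset (V n)) = {α, b} := by
      rcases hmem with rfl | rfl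
      · exact ⟨y, fun hc => hxy hc.symm, by simp, rfl⟩
      · exact ⟨x, hxy, by simp, Finset.pair_comm x α⟩
    have hα0 : α ≠ 0 := fun hc => zero_notMem_li hli (hc ▸ hα)
    have hb0 : b ≠ 0 := fun hc => zero_notMem_li hli (hc ▸ hbmem)
    have hba0 : b + α ≠ 0 := by
      intro hc
      rw [add_cancel_iff, zero_add] at hc
      exact hbα hc
    have h1 : ({α, b} : Finset (V n)) \ {α} = {b} := by
      rw [Finset.sdiff_singleton_eq_erase,
        Finset.erase_insert (Finset.notMem_singleton.mpr (Ne.symm hbα))]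
    have h2 : ({α, b} : Finset (V n)) \ {b} = {α} := by
      rw [Finset.pair_comm, Finset.sdiff_singleton_eq_erase,
        Finset.erase_insert (Finset.notMem_singleton.mpr hbα)]
    have hsum : ∑ β ∈ ({α, b} : Finset (V n)), classSum (({α, b} : Finset (V n)) \ {β})
        = classSum ({b} : Finset (V n)) + classSum ({α} : Finset (V n)) := by
      rw [Finset.sum_pair (Ne.symm hbα), h1, h2]
    unfold dDat
    rw [hσeq, h1, hsum]
    have hshift : shift ({b} : Finset (V n)) α = {b + α} := Finset.image_singleton _ _
    rw [hshift, classSum_singleton hba0, classSum_singleton hb0, classSum_singleton hα0]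
    rw [map_add, map_add, d0_singleton, d0_singleton, d0_singleton]
    exact v_add_self _
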